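/- (Mixture IS second-moment bound) Let $p$ be the density of $N(\lambda,\Sigma)$ and $\tilde p = \sum_j \alpha_j \phi(\cdot; a_j, \Sigma)$ a finite Gaussian mixture with $\alpha_j > 0$, $\sum_j \alpha_j = 1$. Suppose $S = \bigcup_j S^j$ with $S^j$ disjoint and $S^j \subset \{x : (a_j - \lambda)^T\Sigma^{-1}(x - a_j) \geq 0\}$. Then with $L = p/\tilde p$, $E_{\tilde p}[L(X)^2 I(X \in S)] \leq \sum_j e^{-(a_j-\lambda)^T\Sigma^{-1}(a_j-\lambda)}/\alpha_j$. -/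

import Mathlib

/-!
Writing `Q(v) = vᵀΣ⁻¹v`, we have `Q(x - λ) = Q(x - aⱼ) + 2 (aⱼ - λ)ᵀΣ⁻¹(x - aⱼ) + Q(aⱼ - λ)`, so on
the half-space containing `Sʲ` the target density satisfies `p ≤ e^{-Q(aⱼ - λ)/2} φ(·; aⱼ, Σ)`.
Bounding the mixture `p̃` below by its `j`-th term, the integrand `L² p̃ = p² / p̃` is at most
`e^{-Q(aⱼ - λ)} / αⱼ · φ(·; aⱼ, Σ)` on `Sʲ`, whose integral is at most `e^{-Q(aⱼ - λ)} / αⱼ`.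
The integrand is nonnegative, so the integral over `⋃ Sʲ` is at most the sum of these bounds.
The normalisation `∫ φ = 1` comes from the substitution `x = Σ^{1/2} y`.
-/

open MeasureTheory Matrix

/-- The density of `N(m, Σ)` on `ℝ^d` (with respect to Lebesgue measure). -/
noncomputable def gaussDensity {d : ℕ} (m : Fin d → ℝ) (Sig : Matrix (Fin d) (Fin d) ℝ)
    (x : Fin d → ℝ) : ℝ :=
  (2 * Real.pi) ^ (-(d : ℝ) / 2) * Sig.det ^ (-(1 : ℝ) / 2) *
    Real.exp (-(1 / 2) * ((x - m) ⬝ᵥ (Sig⁻¹ *ᵥ (x - m))))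

section LinearChangeOfVariables

variable {ι : Type*} [Fintype ι] [DecidableEq ι] {A : Matrix ι ι ℝ}

lemma measurableEmbedding_mulVec (hA : A.det ≠ 0) : MeasurableEmbedding (A *ᵥ ·) :=
  ((toLin' A).equivOfDetNeZero (by rwa [LinearMap.det_toLin'])).toContinuousLinearEquiv
    |>.toHomeomorph.measurableEmbedding

lemma map_mulVec_volume (hA : A.det ≠ 0) :
    volume.map (A *ᵥ ·) = ENNReal.ofReal |A.det⁻¹| • volume :=
  Real.map_matrix_volume_pi_eq_smul_volume_pi hA

lemma integral_comp_mulVec (hA : A.det ≠ 0) (g : (ι → ℝ) → ℝ) :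
    ∫ y, g (A *ᵥ y) = |A.det|⁻¹ * ∫ x, g x := by
  rw [← (measurableEmbedding_mulVec hA).integral_map, map_mulVec_volume hA, integral_smul_measure,
    ENNReal.toReal_ofReal (abs_nonneg _), abs_inv, smul_eq_mul]

lemma integrable_comp_mulVec_iff (hA : A.det ≠ 0) {g : (ι → ℝ) → ℝ} :
    Integrable (fun y ↦ g (A *ᵥ y)) ↔ Integrable g := by
  rw [← Function.comp_def, ← (measurableEmbedding_mulVec hA).integrable_map_iff,
    map_mulVec_volume hA, integrable_smul_measure (by simpa using hA) ENNReal.ofReal_ne_top]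

end LinearChangeOfVariables

section StandardGaussian

variable {ι : Type*} [Fintype ι]

lemma exp_neg_half_dotProduct_self (y : ι → ℝ) :
    Real.exp (-(1 / 2) * (y ⬝ᵥ y)) = ∏ i, Real.exp (-(1 / 2) * y i ^ 2) := by
  simp only [← Real.exp_sum, dotProduct, Finset.mul_sum, sq]

lemma integrable_exp_neg_half_dotProduct_self :
    Integrable fun y : ι → ℝ ↦ Real.exp (-(1 / 2) * (y ⬝ᵥ y)) := by
  simp_rw [exp_neg_half_dotProduct_self]
  exact Integrable.fintype_prod (f := fun _ t ↦ Real.exp (-(1 / 2) * t ^ 2))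
    fun _ ↦ integrable_exp_neg_mul_sq (by norm_num)

lemma integral_exp_neg_half_dotProduct_self :
    ∫ y : ι → ℝ, Real.exp (-(1 / 2) * (y ⬝ᵥ y)) = √(2 * Real.pi) ^ Fintype.card ι := by
  simp_rw [exp_neg_half_dotProduct_self]
  rw [integral_fintype_prod_volume_eq_pow (fun t ↦ Real.exp (-(1 / 2) * t ^ 2)),
    integral_gaussian]
  norm_num [div_div_eq_mul_div, mul_comm]

end StandardGaussian

section QuadraticForm

variable {ι : Type*} [Fintype ι] [DecidableEq ι] {Sig : Matrix ι ι ℝ}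

open scoped MatrixOrder in
lemma Matrix.PosDef.exists_mulVec_quadForm_inv_eq (hpd : Sig.PosDef) :
    ∃ A : Matrix ι ι ℝ, A.det = √Sig.det ∧
      ∀ y, (A *ᵥ y) ⬝ᵥ (Sig⁻¹ *ᵥ (A *ᵥ y)) = y ⬝ᵥ y := by
  set A := CFC.sqrt Sig
  have hAA : A * A = Sig := CFC.sqrt_mul_sqrt_self Sig hpd.posSemidef.nonneg
  have hAsymm : A.IsSymm := by
    simpa [conjTranspose_eq_transpose_of_trivial] using (CFC.sqrt_nonneg Sig).posSemidef.1
  have hAdet : A.det = √Sig.det := by simpa using hpd.posSemidef.det_sqrt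
  have hAunit : IsUnit A.det := by
    rw [hAdet, isUnit_iff_ne_zero, Real.sqrt_ne_zero']
    exact hpd.det_pos
  have hone : A * Sig⁻¹ * A = 1 := by
    rw [← hAA, mul_inv_rev, ← Matrix.mul_assoc, mul_nonsing_inv _ hAunit, Matrix.one_mul,
      nonsing_inv_mul _ hAunit]
  refine ⟨A, hAdet, fun y ↦ ?_⟩
  rw [mulVec_mulVec, dotProduct_mulVec, vecMul_mulVec, hAsymm.eq, ← Matrix.mul_assoc, hone,
    vecMul_one]

lemma integrable_exp_neg_half_quadForm_inv (hpd : Sig.PosDef) :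
    Integrable fun x ↦ Real.exp (-(1 / 2) * (x ⬝ᵥ (Sig⁻¹ *ᵥ x))) := by
  obtain ⟨A, hAdet, hA⟩ := hpd.exists_mulVec_quadForm_inv_eq
  have hA0 : A.det ≠ 0 := by rw [hAdet]; exact (Real.sqrt_pos.2 hpd.det_pos).ne'
  rw [← integrable_comp_mulVec_iff hA0]
  simpa only [hA] using integrable_exp_neg_half_dotProduct_self

lemma integral_exp_neg_half_quadForm_inv (hpd : Sig.PosDef) :
    ∫ x, Real.exp (-(1 / 2) * (x ⬝ᵥ (Sig⁻¹ *ᵥ x))) =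
      √Sig.det * √(2 * Real.pi) ^ Fintype.card ι := by
  obtain ⟨A, hAdet, hA⟩ := hpd.exists_mulVec_quadForm_inv_eq
  have hApos : 0 < A.det := by rw [hAdet]; exact Real.sqrt_pos.2 hpd.det_pos
  have hcov := integral_comp_mulVec hApos.ne' fun x ↦ Real.exp (-(1 / 2) * (x ⬝ᵥ (Sig⁻¹ *ᵥ x)))
  simp only [hA, integral_exp_neg_half_dotProduct_self, abs_of_pos hApos] at hcov
  rw [hcov, ← hAdet, mul_inv_cancel_left₀ hApos.ne']

end QuadraticForm

lemma Real.rpow_neg_half_mul_sqrt_pow {x : ℝ} (hx : 0 < x) (n : ℕ) :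
    x ^ (-(n : ℝ) / 2) * √x ^ n = 1 := by
  rw [Real.sqrt_eq_rpow, ← Real.rpow_natCast, ← Real.rpow_mul hx.le, ← Real.rpow_add hx]
  ring_nf
  exact Real.rpow_zero x

section GaussDensity

variable {d : ℕ} {Sig : Matrix (Fin d) (Fin d) ℝ}

lemma gaussDensity_pos (m : Fin d → ℝ) (hpd : Sig.PosDef) (x : Fin d → ℝ) :
    0 < gaussDensity m Sig x := by
  have := hpd.det_pos
  unfold gaussDensity
  positivity

lemma continuous_gaussDensity (m : Fin d → ℝ) (Sig : Matrix (Fin d) (Fin d) ℝ) :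
    Continuous (gaussDensity m Sig) := by
  unfold gaussDensity
  simp only [dotProduct, mulVec]
  fun_prop

@[fun_prop]
lemma measurable_gaussDensity (m : Fin d → ℝ) (Sig : Matrix (Fin d) (Fin d) ℝ) :
    Measurable (gaussDensity m Sig) :=
  (continuous_gaussDensity m Sig).measurable

lemma integrable_gaussDensity (m : Fin d → ℝ) (hpd : Sig.PosDef) :
    Integrable (gaussDensity m Sig) :=
  ((integrable_exp_neg_half_quadForm_inv hpd).comp_sub_right m).const_mul _

lemma integral_gaussDensity (m : Fin d → ℝ) (hpd : Sig.PosDef) :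
    ∫ x, gaussDensity m Sig x = 1 := by
  have h2pi : 0 < 2 * Real.pi := by positivity
  unfold gaussDensity
  rw [integral_const_mul,
    integral_sub_right_eq_self (fun x ↦ Real.exp (-(1 / 2) * (x ⬝ᵥ (Sig⁻¹ *ᵥ x)))),
    integral_exp_neg_half_quadForm_inv hpd, Fintype.card_fin]
  calc (2 * Real.pi) ^ (-(d : ℝ) / 2) * Sig.det ^ (-(1 : ℝ) / 2) *
        (√Sig.det * √(2 * Real.pi) ^ d)
      = ((2 * Real.pi) ^ (-(d : ℝ) / 2) * √(2 * Real.pi) ^ d) *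
          (Sig.det ^ (-((1 : ℕ) : ℝ) / 2) * √Sig.det ^ 1) := by
        push_cast; ring
    _ = 1 := by
        rw [Real.rpow_neg_half_mul_sqrt_pow h2pi, Real.rpow_neg_half_mul_sqrt_pow hpd.det_pos,
          one_mul]

lemma setIntegral_gaussDensity_le_one (m : Fin d → ℝ) (hpd : Sig.PosDef) (s : Set (Fin d → ℝ)) :
    ∫ x in s, gaussDensity m Sig x ≤ 1 :=
  integral_gaussDensity m hpd ▸ setIntegral_le_integral (integrable_gaussDensity m hpd)
    (.of_forall fun x ↦ (gaussDensity_pos m hpd x).le)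

end GaussDensity

lemma Matrix.IsSymm.dotProduct_mulVec_comm {ι : Type*} [Fintype ι] {M : Matrix ι ι ℝ}
    (hM : M.IsSymm) (u v : ι → ℝ) : u ⬝ᵥ (M *ᵥ v) = v ⬝ᵥ (M *ᵥ u) := by
  rw [dotProduct_mulVec, ← mulVec_transpose, hM.eq, dotProduct_comm]

lemma Matrix.IsSymm.dotProduct_mulVec_add_add {ι : Type*} [Fintype ι] {M : Matrix ι ι ℝ}
    (hM : M.IsSymm) (u v : ι → ℝ) :
    (u + v) ⬝ᵥ (M *ᵥ (u + v)) = u ⬝ᵥ (M *ᵥ u) + 2 * (v ⬝ᵥ (M *ᵥ u)) + v ⬝ᵥ (M *ᵥ v) := by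
  rw [mulVec_add, add_dotProduct, dotProduct_add, dotProduct_add, hM.dotProduct_mulVec_comm u v]
  ring

section Overshoot

variable {d : ℕ} {Sig : Matrix (Fin d) (Fin d) ℝ}

lemma gaussDensity_le_of_nonneg {lam a x : Fin d → ℝ} (hpd : Sig.PosDef)
    (hx : 0 ≤ (a - lam) ⬝ᵥ (Sig⁻¹ *ᵥ (x - a))) :
    gaussDensity lam Sig x ≤
      Real.exp (-(1 / 2) * ((a - lam) ⬝ᵥ (Sig⁻¹ *ᵥ (a - lam)))) * gaussDensity a Sig x := by
  have hsymm : Sig⁻¹.IsSymm := by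
    simpa [conjTranspose_eq_transpose_of_trivial] using hpd.1.inv
  have hexpand := hsymm.dotProduct_mulVec_add_add (x - a) (a - lam)
  rw [sub_add_sub_cancel] at hexpand
  have hC : 0 ≤ (2 * Real.pi) ^ (-(d : ℝ) / 2) * Sig.det ^ (-(1 : ℝ) / 2) := by
    have := hpd.det_pos
    positivity
  unfold gaussDensity
  rw [mul_left_comm, ← Real.exp_add]
  gcongr
  nlinarith

lemma gaussDensity_sq_le_of_nonneg {lam a x : Fin d → ℝ} (hpd : Sig.PosDef)
    (hx : 0 ≤ (a - lam) ⬝ᵥ (Sig⁻¹ *ᵥ (x - a))) :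
    gaussDensity lam Sig x ^ 2 ≤
      Real.exp (-((a - lam) ⬝ᵥ (Sig⁻¹ *ᵥ (a - lam)))) * gaussDensity a Sig x ^ 2 := by
  calc gaussDensity lam Sig x ^ 2
      ≤ (Real.exp (-(1 / 2) * ((a - lam) ⬝ᵥ (Sig⁻¹ *ᵥ (a - lam)))) * gaussDensity a Sig x) ^ 2 :=
        pow_le_pow_left₀ (gaussDensity_pos lam hpd x).le (gaussDensity_le_of_nonneg hpd hx) 2
    _ = _ := by rw [mul_pow, ← Real.exp_nat_mul]; ring_nf

end Overshoot

lemma MeasureTheory.setIntegral_iUnion_le_sum_of_le {X ι : Type*} [MeasurableSpace X] [Fintype ι]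
    {μ : Measure X} {S : ι → Set X} {f : X → ℝ} {g : ι → X → ℝ} (hS : ∀ j, MeasurableSet (S j))
    (hf : AEStronglyMeasurable f μ) (hf0 : ∀ x, 0 ≤ f x) (hfg : ∀ j, ∀ x ∈ S j, f x ≤ g j x)
    (hg : ∀ j, IntegrableOn (g j) (S j) μ) :
    ∫ x in ⋃ j, S j, f x ∂μ ≤ ∑ j, ∫ x in S j, g j x ∂μ := by
  have hfS : ∀ j, IntegrableOn f (S j) μ := fun j ↦
    (hg j).mono' hf.restrict <| (ae_restrict_iff' (hS j)).2 <| .of_forall fun x hx ↦ by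
      rw [Real.norm_of_nonneg (hf0 x)]; exact hfg j x hx
  calc ∫ x in ⋃ j, S j, f x ∂μ
      ≤ ∫ x, f x ∂(∑ j, μ.restrict (S j)) := by
        rw [← Measure.sum_fintype]
        exact integral_mono_measure Measure.restrict_iUnion_le (.of_forall hf0)
          (by rw [Measure.sum_fintype]; exact integrable_finsetSum_measure.2 fun j _ ↦ hfS j)
    _ = ∑ j, ∫ x in S j, f x ∂μ := integral_finsetSum_measure fun j _ ↦ hfS j
    _ ≤ ∑ j, ∫ x in S j, g j x ∂μ :=
        Finset.sum_le_sum fun j _ ↦ setIntegral_mono_on (hfS j) (hg j) (hS j) (hfg j)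

section Mixture

variable {d : ℕ} {ι : Type*} [Fintype ι] {Sig : Matrix (Fin d) (Fin d) ℝ}

lemma sq_div_gaussMixture_mul_le {lam x : Fin d → ℝ} {a : ι → Fin d → ℝ} {α : ι → ℝ}
    (hpd : Sig.PosDef) (hα : ∀ j, 0 < α j) {j : ι}
    (hx : 0 ≤ (a j - lam) ⬝ᵥ (Sig⁻¹ *ᵥ (x - a j))) :
    (gaussDensity lam Sig x / ∑ k, α k * gaussDensity (a k) Sig x) ^ 2 *
        (∑ k, α k * gaussDensity (a k) Sig x) ≤
      Real.exp (-((a j - lam) ⬝ᵥ (Sig⁻¹ *ᵥ (a j - lam)))) / α j * gaussDensity (a j) Sig x := by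
  set q := ∑ k, α k * gaussDensity (a k) Sig x
  have hφ := gaussDensity_pos (a j) hpd x
  have hjpos : 0 < α j * gaussDensity (a j) Sig x := mul_pos (hα j) hφ
  have hjle : α j * gaussDensity (a j) Sig x ≤ q := Finset.single_le_sum
    (fun k _ ↦ (mul_pos (hα k) (gaussDensity_pos (a k) hpd x)).le) (Finset.mem_univ j)
  calc (gaussDensity lam Sig x / q) ^ 2 * q = gaussDensity lam Sig x ^ 2 / q := by
        field_simp [(hjpos.trans_le hjle).ne']
    _ ≤ gaussDensity lam Sig x ^ 2 / (α j * gaussDensity (a j) Sig x) := by gcongr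
    _ ≤ Real.exp (-((a j - lam) ⬝ᵥ (Sig⁻¹ *ᵥ (a j - lam)))) * gaussDensity (a j) Sig x ^ 2 /
          (α j * gaussDensity (a j) Sig x) := by
        gcongr; exact gaussDensity_sq_le_of_nonneg hpd hx
    _ = _ := by field_simp

end Mixture

theorem stmt13_general {d m : ℕ} (lam : Fin d → ℝ) (Sig : Matrix (Fin d) (Fin d) ℝ)
    (hpd : Sig.PosDef) (a : Fin m → (Fin d → ℝ)) (α : Fin m → ℝ)
    (hα : ∀ j, 0 < α j)
    (S : Fin m → Set (Fin d → ℝ)) (hSmeas : ∀ j, MeasurableSet (S j))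
    (hdom : ∀ j, ∀ x ∈ S j, 0 ≤ (a j - lam) ⬝ᵥ (Sig⁻¹ *ᵥ (x - a j))) :
    (∫ x in ⋃ j, S j,
        (gaussDensity lam Sig x / ∑ j, α j * gaussDensity (a j) Sig x) ^ 2 *
          (∑ j, α j * gaussDensity (a j) Sig x)) ≤
      ∑ j, Real.exp (-((a j - lam) ⬝ᵥ (Sig⁻¹ *ᵥ (a j - lam)))) / α j := by
  set c : Fin m → ℝ := fun j ↦ Real.exp (-((a j - lam) ⬝ᵥ (Sig⁻¹ *ᵥ (a j - lam)))) / α j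
  have hc : ∀ j, 0 ≤ c j := fun j ↦ div_nonneg (Real.exp_nonneg _) (hα j).le
  have hq : ∀ x, 0 ≤ ∑ j, α j * gaussDensity (a j) Sig x := fun x ↦
    Finset.sum_nonneg fun j _ ↦ (mul_pos (hα j) (gaussDensity_pos (a j) hpd x)).le
  calc _ ≤ ∑ j, ∫ x in S j, c j * gaussDensity (a j) Sig x :=
        setIntegral_iUnion_le_sum_of_le hSmeas (by fun_prop)
          (fun x ↦ mul_nonneg (sq_nonneg _) (hq x))
          (fun j x hx ↦ sq_div_gaussMixture_mul_le hpd hα (hdom j x hx))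
          fun j ↦ ((integrable_gaussDensity (a j) hpd).const_mul (c j)).integrableOn
    _ ≤ ∑ j, c j := Finset.sum_le_sum fun j _ ↦ by
        rw [integral_const_mul]
        exact mul_le_of_le_one_right (hc j) (setIntegral_gaussDensity_le_one (a j) hpd (S j))

/-- Mixture IS second-moment bound: with target `p = N(λ,Σ)`, mixture proposal
`p̃ = ∑ⱼ αⱼ φ(·; aⱼ, Σ)`, and `S = ⋃ⱼ Sʲ` with the `Sʲ` disjoint and each `Sʲ` inside
the half-space `{x : (aⱼ-λ)ᵀΣ⁻¹(x-aⱼ) ≥ 0}`, the second moment of `L·I_S` under `p̃`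
is at most `∑ⱼ e^{-(aⱼ-λ)ᵀΣ⁻¹(aⱼ-λ)}/αⱼ`. -/
theorem stmt13 {d m : ℕ} (lam : Fin d → ℝ) (Sig : Matrix (Fin d) (Fin d) ℝ)
    (hpd : Sig.PosDef) (a : Fin m → (Fin d → ℝ)) (α : Fin m → ℝ)
    (hα : ∀ j, 0 < α j) (hsum : ∑ j, α j = 1)
    (S : Fin m → Set (Fin d → ℝ)) (hSmeas : ∀ j, MeasurableSet (S j))
    (hdisj : Pairwise (Function.onFun Disjoint S))
    (hdom : ∀ j, ∀ x ∈ S j, 0 ≤ (a j - lam) ⬝ᵥ (Sig⁻¹ *ᵥ (x - a j))) :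
    (∫ x in ⋃ j, S j,
        (gaussDensity lam Sig x / ∑ j, α j * gaussDensity (a j) Sig x) ^ 2 *
          (∑ j, α j * gaussDensity (a j) Sig x)) ≤
      ∑ j, Real.exp (-((a j - lam) ⬝ᵥ (Sig⁻¹ *ᵥ (a j - lam)))) / α j :=
  stmt13_general lam Sig hpd a α hα S hSmeas hdom
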